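/- arXiv:1803.10029 — 3 statements merged into one kernel-verified Lean document; each statement's English description precedes it below -/
import Mathlib

section
/- Let f, φ : ℝⁿ → ℝ be measurable with φ(x) ≥ 0, f(0) = 0, and |f(x)| < 1 on a neighborhood U containing the support of φ. Let ρ ≤ 0 be such that Z(s) = ∫_{ℝⁿ} |f(x)|^s·φ(x) dx converges (the integrand is integrable) for all real s > ρ. If there is a holomorphic function Z̃ on an open set containing {Re(s) > ρ} ∪ V, where V is an open neighborhood of ρ, agreeing with Z on {Re(s) > ρ}, then there exists δ > 0 such that the integral ∫_{ℝⁿ} |f(x)|^{ρ-δ}·φ(x) dx converges. -/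
/-!
Landau's argument. Choose `c > 0` with `ball ρ c ⊆ V` and a real `a ∈ (ρ, ρ + c)`. Points of
`ball a c` with real part `≤ ρ` are closer to `ρ` than to `a`, so `Z'` is holomorphic on
`ball a c`, and its Taylor series at `a` converges at every real `s₀ ∈ (a - c, ρ)`. On
`Re s > ρ` the derivatives of `Z` may be taken under the integral sign,
`Z⁽ᵏ⁾(a) = ∫ |f|^a (log |f|)^k φ`, so that series reads `∑ₖ ∫ |f|^a φ ((s₀ - a) log |f|)^k / k!`.
Since `|f| ≤ 1` on the support of `φ`, every integrand is nonnegative, and monotone convergence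
identifies the sum with `∫ |f|^a φ exp ((s₀ - a) log |f|) = ∫ |f|^s₀ φ`, which is thus finite.
-/

open Real Filter Set Topology MeasureTheory Complex
open scoped ENNReal

lemma rpow_mul_abs_log_pow_le {t ε : ℝ} (ht0 : 0 < t) (ht1 : t ≤ 1) (hε : 0 < ε) (k : ℕ) :
    t ^ ε * |Real.log t| ^ k ≤ k.factorial / ε ^ k := by
  have hlog : |Real.log t| = -Real.log t := abs_of_nonpos (Real.log_nonpos ht0.le ht1)
  have hexp : (ε * |Real.log t|) ^ k / k.factorial ≤ t ^ (-ε) := by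
    rw [Real.rpow_def_of_pos ht0, hlog, show Real.log t * -ε = ε * -Real.log t by ring]
    exact Real.pow_div_factorial_le_exp _ (by rw [← hlog]; positivity) k
  rw [mul_pow, div_le_iff₀ (by positivity)] at hexp
  rw [le_div_iff₀ (by positivity)]
  calc t ^ ε * |Real.log t| ^ k * ε ^ k = t ^ ε * (ε ^ k * |Real.log t| ^ k) := by ring
    _ ≤ t ^ ε * (t ^ (-ε) * k.factorial) := by gcongr
    _ = k.factorial := by rw [← mul_assoc, ← Real.rpow_add ht0]; simp

lemma norm_ofReal_cpow_le {t : ℝ} (ht : 0 ≤ t) (u : ℂ) :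
    ‖(t : ℂ) ^ u‖ ≤ t ^ u.re := by
  simpa [arg_ofReal_of_nonneg ht, abs_of_nonneg ht] using norm_cpow_le (t : ℂ) u

lemma norm_ofReal_cpow_mul_log_pow_mul_le {t : ℝ} (ht : 0 ≤ t) (u : ℂ) (k : ℕ) (c : ℝ) :
    ‖(t : ℂ) ^ u * (Real.log t : ℂ) ^ k * c‖ ≤ ‖t ^ u.re * Real.log t ^ k * c‖ := by
  simp only [norm_mul, norm_pow, Complex.norm_real, Real.norm_eq_abs,
    abs_of_nonneg (Real.rpow_nonneg ht _)]
  gcongr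
  exact norm_ofReal_cpow_le ht u

lemma rpow_mul_exp_sub_mul_log {t a b : ℝ} (ht : 0 ≤ t) (ha : a ≠ 0) (hb : b ≠ 0) :
    t ^ a * Real.exp ((b - a) * Real.log t) = t ^ b := by
  rcases ht.eq_or_lt with rfl | ht
  · simp [Real.zero_rpow ha, Real.zero_rpow hb]
  rw [mul_comm (b - a), ← Real.rpow_def_of_pos ht, ← Real.rpow_add ht, add_sub_cancel]

lemma ball_ofReal_subset_ball_union {ρ a r : ℝ} (h : ρ ≤ a) :
    Metric.ball (a : ℂ) r ⊆ Metric.ball (ρ : ℂ) r ∪ {s | ρ < s.re} := by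
  intro z hz
  by_cases hre : ρ < z.re
  · exact Or.inr hre
  refine Or.inl (lt_of_le_of_lt ?_ (Metric.mem_ball.1 hz) : dist z ρ < r)
  rw [Complex.dist_eq_re_im, Complex.dist_eq_re_im]
  simp only [ofReal_re, ofReal_im]
  gcongr √(?_ + _)
  nlinarith

lemma integrable_of_hasSum_of_nonneg {α : Type*} [MeasurableSpace α] {μ : Measure α}
    {F : ℕ → α → ℝ} {f : α → ℝ} (hf : AEStronglyMeasurable f μ)
    (hF : ∀ k, Integrable (F k) μ) (hF0 : ∀ k x, 0 ≤ F k x)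
    (hFf : ∀ x, HasSum (F · x) (f x)) (hsum : Summable fun k => ∫ x, F k x ∂μ) :
    Integrable f μ := by
  refine ⟨hf, ?_⟩
  have hlint (k : ℕ) :
      ∫⁻ x, ENNReal.ofReal (F k x) ∂μ = ENNReal.ofReal (∫ x, F k x ∂μ) :=
    (ofReal_integral_eq_lintegral_ofReal (hF k) (.of_forall (hF0 k))).symm
  rw [hasFiniteIntegral_iff_ofReal (.of_forall fun x => (hFf x).nonneg (hF0 · x))]
  calc ∫⁻ x, ENNReal.ofReal (f x) ∂μ = ∫⁻ x, ∑' k, ENNReal.ofReal (F k x) ∂μ := by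
        congr! 2 with x
        rw [← (hFf x).tsum_eq, ENNReal.ofReal_tsum_of_nonneg (hF0 · x) (hFf x).summable]
    _ = ENNReal.ofReal (∑' k, ∫ x, F k x ∂μ) := by
        rw [lintegral_tsum fun k => (hF k).1.aemeasurable.ennreal_ofReal,
          ENNReal.ofReal_tsum_of_nonneg (fun k => integral_nonneg (hF0 k)) hsum]
        simp only [hlint]
    _ < ∞ := ENNReal.ofReal_lt_top

section LocalZeta

variable {α : Type*} [MeasurableSpace α] {μ : Measure α} {g φ : α → ℝ} {ρ : ℝ}

lemma integrable_rpow_mul_log_pow_mul (hg : Measurable g) (hφ : Measurable φ)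
    (hg0 : ∀ x, 0 ≤ g x) (hg1 : ∀ x, φ x ≠ 0 → g x ≤ 1)
    (hint : ∀ s : ℝ, ρ < s → Integrable (fun x => g x ^ s * φ x) μ)
    (k : ℕ) {s : ℝ} (hs : ρ < s) :
    Integrable (fun x => g x ^ s * Real.log (g x) ^ k * φ x) μ := by
  rcases Nat.eq_zero_or_pos k with rfl | hk
  · simpa using hint s hs
  obtain ⟨s', hρs', hs's⟩ := exists_between hs
  refine ((hint s' hρs').const_mul (k.factorial / (s - s') ^ k)).mono (by fun_prop)
    (.of_forall fun x => ?_)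
  by_cases hφx : φ x = 0
  · simp [hφx]
  rcases (hg0 x).eq_or_lt with hgx | hgx
  · simp only [← hgx, Real.log_zero, zero_pow hk.ne', mul_zero, zero_mul, norm_zero]
    positivity
  have hsplit : g x ^ s = g x ^ (s - s') * g x ^ s' := by
    rw [← Real.rpow_add hgx]; ring_nf
  have hbound := rpow_mul_abs_log_pow_le hgx (hg1 x hφx) (sub_pos.2 hs's) k
  simp only [norm_mul, norm_pow, Real.norm_eq_abs, abs_of_nonneg (Real.rpow_nonneg (hg0 x) _),
    abs_of_nonneg (by positivity : (0:ℝ) ≤ k.factorial / (s - s') ^ k), hsplit]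
  calc g x ^ (s - s') * g x ^ s' * |Real.log (g x)| ^ k * |φ x|
      = g x ^ (s - s') * |Real.log (g x)| ^ k * (g x ^ s' * |φ x|) := by ring
    _ ≤ k.factorial / (s - s') ^ k * (g x ^ s' * |φ x|) := by gcongr

/-- `localZeta μ g φ k` is the `k`-th derivative of the local zeta function
`localZeta μ g φ 0 = fun s => ∫ x, g x ^ s * φ x ∂μ`. -/
noncomputable def localZeta (μ : Measure α) (g φ : α → ℝ) (k : ℕ) (s : ℂ) : ℂ :=
  ∫ x, (g x : ℂ) ^ s * (Real.log (g x) : ℂ) ^ k * φ x ∂μ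

lemma integrable_localZeta_integrand (hg : Measurable g) (hφ : Measurable φ)
    (hg0 : ∀ x, 0 ≤ g x) (hg1 : ∀ x, φ x ≠ 0 → g x ≤ 1)
    (hint : ∀ s : ℝ, ρ < s → Integrable (fun x => g x ^ s * φ x) μ)
    (k : ℕ) {s : ℂ} (hs : ρ < s.re) :
    Integrable (fun x => (g x : ℂ) ^ s * (Real.log (g x) : ℂ) ^ k * φ x) μ :=
  (integrable_rpow_mul_log_pow_mul hg hφ hg0 hg1 hint k hs).mono (by fun_prop)
    (.of_forall fun x => norm_ofReal_cpow_mul_log_pow_mul_le (hg0 x) s k (φ x))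

lemma hasDerivAt_localZeta (hg : Measurable g) (hφ : Measurable φ)
    (hg0 : ∀ x, 0 ≤ g x) (hg1 : ∀ x, φ x ≠ 0 → g x ≤ 1)
    (hint : ∀ s : ℝ, ρ < s → Integrable (fun x => g x ^ s * φ x) μ)
    (k : ℕ) {s : ℂ} (hs : ρ < s.re) (hs0 : s ≠ 0) :
    HasDerivAt (localZeta μ g φ k) (localZeta μ g φ (k + 1) s) s := by
  obtain ⟨m, hρm, hms⟩ := exists_between hs
  have hW : {u : ℂ | m < u.re ∧ u ≠ 0} ∈ 𝓝 s :=
    ((isOpen_lt continuous_const continuous_re).inter isOpen_ne).mem_nhds ⟨hms, hs0⟩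
  refine (hasDerivAt_integral_of_dominated_loc_of_deriv_le hW (.of_forall fun u => by fun_prop)
    (integrable_localZeta_integrand hg hφ hg0 hg1 hint k hs) (by fun_prop)
    (.of_forall fun x u hu =>
      (norm_ofReal_cpow_mul_log_pow_mul_le (hg0 x) u (k + 1) (φ x)).trans ?_)
    (integrable_rpow_mul_log_pow_mul hg hφ hg0 hg1 hint (k + 1) hρm).norm
    (.of_forall fun x u hu => ?_)).2
  · by_cases hφx : φ x = 0
    · simp [hφx]
    rcases (hg0 x).eq_or_lt with hgx | hgx
    · simp [← hgx]
    simp only [norm_mul, norm_pow, Real.norm_eq_abs, abs_of_nonneg (Real.rpow_nonneg (hg0 x) _)]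
    gcongr ?_ * _ * _
    exact Real.rpow_le_rpow_of_exponent_ge hgx (hg1 x hφx) hu.1.le
  · have hd :
        HasDerivAt (fun v : ℂ => (g x : ℂ) ^ v) ((g x : ℂ) ^ u * Real.log (g x)) u := by
      simpa [Complex.ofReal_log (hg0 x)] using (hasDerivAt_id u).const_cpow (Or.inr hu.2)
    exact ((hd.mul_const _).mul_const _).congr_deriv (by ring)

lemma iteratedDeriv_localZeta (hg : Measurable g) (hφ : Measurable φ)
    (hg0 : ∀ x, 0 ≤ g x) (hg1 : ∀ x, φ x ≠ 0 → g x ≤ 1)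
    (hint : ∀ s : ℝ, ρ < s → Integrable (fun x => g x ^ s * φ x) μ)
    (k : ℕ) {s : ℂ} (hs : ρ < s.re) (hs0 : s ≠ 0) :
    iteratedDeriv k (localZeta μ g φ 0) s = localZeta μ g φ k s := by
  induction k generalizing s with
  | zero => rfl
  | succ k ih =>
    have hW : {u : ℂ | ρ < u.re ∧ u ≠ 0} ∈ 𝓝 s :=
      ((isOpen_lt continuous_const continuous_re).inter isOpen_ne).mem_nhds ⟨hs, hs0⟩
    rw [iteratedDeriv_succ, (eventuallyEq_of_mem hW fun u hu => ih hu.1 hu.2).deriv_eq]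
    exact (hasDerivAt_localZeta hg hφ hg0 hg1 hint k hs hs0).deriv

lemma localZeta_ofReal (hg0 : ∀ x, 0 ≤ g x) (k : ℕ) (a : ℝ) :
    localZeta μ g φ k a = ((∫ x, g x ^ a * Real.log (g x) ^ k * φ x ∂μ : ℝ) : ℂ) := by
  rw [localZeta, ← integral_complex_ofReal]
  congr with x
  push_cast [Complex.ofReal_cpow (hg0 x)]
  rfl

theorem integrable_rpow_mul_of_differentiableOn_ball (hg : Measurable g) (hφ : Measurable φ)
    (hg0 : ∀ x, 0 ≤ g x) (hφ0 : ∀ x, 0 ≤ φ x) (hg1 : ∀ x, φ x ≠ 0 → g x ≤ 1)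
    (hint : ∀ s : ℝ, ρ < s → Integrable (fun x => g x ^ s * φ x) μ)
    {F : ℂ → ℂ} {a r s₀ : ℝ} (ha : ρ < a) (ha0 : a ≠ 0)
    (hF : DifferentiableOn ℂ F (Metric.ball (a : ℂ) r))
    (hFa : F =ᶠ[𝓝 (a : ℂ)] localZeta μ g φ 0)
    (hs₀ : s₀ ∈ Ioc (a - r) a) (hs₀0 : s₀ ≠ 0) :
    Integrable (fun x => g x ^ s₀ * φ x) μ := by
  set T : ℕ → α → ℝ := fun k x =>
    (s₀ - a) ^ k / k.factorial * (g x ^ a * Real.log (g x) ^ k * φ x)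
  have hT (k : ℕ) (x : α) :
      T k x = g x ^ a * φ x * (((s₀ - a) * Real.log (g x)) ^ k / k.factorial) := by
    simp only [T, mul_pow]; ring
  have hT_int (k : ℕ) : Integrable (T k) μ :=
    (integrable_rpow_mul_log_pow_mul hg hφ hg0 hg1 hint k ha).const_mul _
  have hT_nonneg (k : ℕ) (x : α) : 0 ≤ T k x := by
    by_cases hφx : φ x = 0
    · simp [T, hφx]
    have hL : 0 ≤ (s₀ - a) * Real.log (g x) :=
      mul_nonneg_of_nonpos_of_nonpos (by linarith [hs₀.2]) (Real.log_nonpos (hg0 x) (hg1 x hφx))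
    have hga := Real.rpow_nonneg (hg0 x) a
    have hφx := hφ0 x
    rw [hT]
    positivity
  have hT_sum (x : α) : HasSum (T · x) (g x ^ s₀ * φ x) := by
    have hexp := (NormedSpace.expSeries_div_hasSum_exp ((s₀ - a) * Real.log (g x))).mul_left
      (g x ^ a * φ x)
    rw [← Real.exp_eq_exp_ℝ, mul_right_comm, rpow_mul_exp_sub_mul_log (hg0 x) ha0 hs₀0]
      at hexp
    simpa only [hT] using hexp
  have hTaylor (k : ℕ) :
      (k.factorial : ℂ)⁻¹ • ((s₀ : ℂ) - a) ^ k • iteratedDeriv k F a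
      = ((∫ x, T k x ∂μ : ℝ) : ℂ) := by
    rw [hFa.iteratedDeriv_eq, iteratedDeriv_localZeta hg hφ hg0 hg1 hint k (by simpa) (by simpa),
      localZeta_ofReal hg0, integral_const_mul]
    simp only [smul_eq_mul]
    push_cast
    ring
  have hs₀ball : (s₀ : ℂ) ∈ Metric.ball (a : ℂ) r := by
    rw [Metric.mem_ball, Complex.isometry_ofReal.dist_eq, Real.dist_eq,
      abs_of_nonpos (by linarith [hs₀.2])]
    linarith [hs₀.1]
  have hsum := Complex.hasSum_taylorSeries_on_ball hF hs₀ball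
  simp only [hTaylor] at hsum
  exact integrable_of_hasSum_of_nonneg (by fun_prop) hT_int hT_nonneg hT_sum
    (Complex.summable_ofReal.1 hsum.summable)

end LocalZeta

theorem landau_type_local_zeta_general
    (n : ℕ) (f φ : (Fin n → ℝ) → ℝ) (U : Set (Fin n → ℝ))
    (hf : Measurable f) (hφ : Measurable φ)
    (hφ0 : ∀ x, 0 ≤ φ x)
    (hf1 : ∀ x ∈ U, |f x| < 1)
    (hsupp : Function.support φ ⊆ U)
    (ρ : ℝ)
    (hconv : ∀ s : ℝ, ρ < s → Integrable (fun x => |f x| ^ s * φ x))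
    (V : Set ℂ) (hV : IsOpen V) (hρV : (ρ : ℂ) ∈ V)
    (Z' : ℂ → ℂ)
    (hZ'hol : DifferentiableOn ℂ Z' (V ∪ {s : ℂ | ρ < s.re}))
    (hagree : ∀ s : ℂ, ρ < s.re →
      Z' s = ∫ x, ((|f x| : ℝ) : ℂ) ^ s * (φ x : ℂ)) :
    ∃ δ : ℝ, 0 < δ ∧ Integrable (fun x => |f x| ^ (ρ - δ) * φ x) := by
  obtain ⟨c, hc, hcV⟩ := Metric.isOpen_iff.1 hV ρ hρV
  -- `a` and `s₀` avoid `0`: as `0 ^ 0 = 1`, `s ↦ |f x| ^ s` jumps at `s = 0` where `f x = 0`.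
  obtain ⟨a, ⟨hρa, hac⟩, ha0⟩ :=
    ((Ioo_infinite (by linarith : ρ < ρ + c)).sdiff (finite_singleton 0)).nonempty
  obtain ⟨s₀, ⟨has₀, hs₀ρ⟩, hs₀0⟩ :=
    ((Ioo_infinite (by linarith : a - c < ρ)).sdiff (finite_singleton 0)).nonempty
  have hZ'ball : DifferentiableOn ℂ Z' (Metric.ball (a : ℂ) c) :=
    hZ'hol.mono ((ball_ofReal_subset_ball_union hρa.le).trans (union_subset_union_left _ hcV))
  have hZ'a : Z' =ᶠ[𝓝 (a : ℂ)] localZeta volume (|f ·|) φ 0 :=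
    eventuallyEq_of_mem ((isOpen_lt continuous_const continuous_re).mem_nhds (by simpa))
      fun s hs => by simpa [localZeta] using hagree s hs
  refine ⟨ρ - s₀, by linarith, ?_⟩
  rw [sub_sub_cancel]
  exact integrable_rpow_mul_of_differentiableOn_ball hf.abs hφ (fun x => abs_nonneg _) hφ0
    (fun x hx => (hf1 x (hsupp hx)).le) hconv hρa ha0 hZ'ball hZ'a ⟨has₀, by linarith⟩ hs₀0

theorem landau_type_local_zeta
    (n : ℕ) (f φ : (Fin n → ℝ) → ℝ) (U : Set (Fin n → ℝ))
    (hU : IsOpen U) (hU0 : (0 : Fin n → ℝ) ∈ U)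
    (hf : Measurable f) (hφ : Measurable φ)
    (hφ0 : ∀ x, 0 ≤ φ x) (hf0 : f 0 = 0)
    (hf1 : ∀ x ∈ U, |f x| < 1)
    (hsupp : Function.support φ ⊆ U)
    (ρ : ℝ) (hρ : ρ ≤ 0)
    (hconv : ∀ s : ℝ, ρ < s → Integrable (fun x => |f x| ^ s * φ x))
    (V : Set ℂ) (hV : IsOpen V) (hρV : (ρ : ℂ) ∈ V)
    (Z' : ℂ → ℂ)
    (hZ'hol : DifferentiableOn ℂ Z' (V ∪ {s : ℂ | ρ < s.re}))
    (hagree : ∀ s : ℂ, ρ < s.re →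
      Z' s = ∫ x, ((|f x| : ℝ) : ℂ) ^ s * (φ x : ℂ)) :
    ∃ δ : ℝ, 0 < δ ∧ Integrable (fun x => |f x| ^ (ρ - δ) * φ x) :=
  landau_type_local_zeta_general n f φ U hf hφ hφ0 hf1 hsupp ρ hconv V hV hρV Z' hZ'hol hagree
end

section
/- Let a, b, q be integers with 0 ≤ a < b, 2 ≤ b, 1 ≤ q ≤ b, let 0 < p < 1 - a/b, and let ρ̃ > 0. For σ ∈ (-1/b, 0) set X = bσ + 1 and J₁(σ) = ∫₀^{ρ̃} x^{aσ}·(1 − e(x)^X)/X dx with e(x) = exp(-1/(q·x^p)). Then lim_{σ → -1/b⁺} J₁(σ) = ρ̃^{1 - a/b - p}/(q·(1 - a/b - p)). -/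
/-!
Put `X = bσ + 1`, so `X → 0⁺`. The factor `(1 - e ^ X) / X` tends to `-log e`, the derivative of
`X ↦ -e ^ X` at `0`, and the tangent-line bound `exp t ≥ 1 + t` keeps it in `[0, -log e]`; for
`σ ∈ (-1/b, 0]` the factor `x ^ (aσ)` lies below `1 + x ^ (-a/b)`. With `-log e(x) = x ^ (-p) / q`,
dominated convergence therefore reduces the limit to `∫₀^ρ x ^ (-a/b - p) / q`, which is finite
because `-a/b - p > -1`.
-/

open Real Filter Set Topology MeasureTheory

namespace Real

lemma tendsto_one_sub_rpow_div_nhdsNE {e : ℝ} (he : 0 < e) :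
    Tendsto (fun X => (1 - e ^ X) / X) (𝓝[≠] 0) (𝓝 (-log e)) := by
  have h := (hasStrictDerivAt_const_rpow he 0).hasDerivAt.tendsto_slope_zero.neg
  simp only [zero_add, rpow_zero, one_mul, smul_eq_mul] at h
  convert h using 2 with X
  ring

lemma abs_one_sub_rpow_div_le {e X : ℝ} (he₀ : 0 < e) (he₁ : e ≤ 1) (hX : 0 < X) :
    |(1 - e ^ X) / X| ≤ -log e := by
  have h_nonneg : 0 ≤ 1 - e ^ X := sub_nonneg.2 (rpow_le_one he₀.le he₁ hX.le)
  have h_tangent := add_one_le_exp (log e * X)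
  rw [exp_mul, exp_log he₀] at h_tangent
  rw [abs_of_nonneg (div_nonneg h_nonneg hX.le), div_le_iff₀ hX]
  linarith

lemma rpow_le_one_add_rpow {x s t : ℝ} (hx : 0 < x) (hts : t ≤ s) (hs : s ≤ 0) :
    x ^ s ≤ 1 + x ^ t := by
  rcases le_or_gt x 1 with hx₁ | hx₁
  · linarith [rpow_le_rpow_of_exponent_ge hx hx₁ hts]
  · linarith [rpow_le_one_of_one_le_of_nonpos hx₁.le hs, rpow_nonneg hx.le t]

end Real

lemma integrableOn_Ioc_rpow_mul_rpow {α β : ℝ} (hαβ : -1 < α + β) (ρ : ℝ) :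
    IntegrableOn (fun x => x ^ α * x ^ β) (Ioc 0 ρ) :=
  (intervalIntegral.intervalIntegrable_rpow' hαβ (a := 0) (b := ρ)).1.congr_fun
    (fun _ hx => rpow_add hx.1 α β) measurableSet_Ioc

lemma integral_Ioc_rpow_mul_rpow {α β ρ : ℝ} (hαβ : -1 < α + β) (hρ : 0 ≤ ρ) :
    ∫ x in Ioc 0 ρ, x ^ α * x ^ β = ρ ^ (α + β + 1) / (α + β + 1) := by
  rw [setIntegral_congr_fun measurableSet_Ioc (fun x hx => (rpow_add hx.1 α β).symm),
    ← intervalIntegral.integral_of_le hρ, integral_rpow (Or.inl hαβ), zero_rpow (by linarith),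
    sub_zero]

lemma integrableOn_Ioc_one_add_rpow_mul_rpow {α β : ℝ} (hβ : -1 < β) (hαβ : -1 < α + β)
    (ρ : ℝ) : IntegrableOn (fun x => (1 + x ^ α) * x ^ β) (Ioc 0 ρ) := by
  have h := (integrableOn_Ioc_rpow_mul_rpow (α := 0) (by simpa using hβ) ρ).add
    (integrableOn_Ioc_rpow_mul_rpow hαβ ρ)
  refine h.congr_fun (fun x _ => ?_) measurableSet_Ioc
  simp only [Pi.add_apply, rpow_zero]
  ring

lemma tendsto_mul_add_one_nhdsGT {b : ℝ} (hb : 0 < b) :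
    Tendsto (fun σ => b * σ + 1) (𝓝[>] (-1 / b)) (𝓝[>] 0) := by
  have h_cont : Tendsto (fun σ => b * σ + 1) (𝓝 (-1 / b)) (𝓝 0) := by
    have h : Continuous fun σ => b * σ + 1 := by fun_prop
    convert h.tendsto (-1 / b) using 2
    field_simp
    ring
  refine tendsto_nhdsWithin_iff.2 ⟨h_cont.mono_left nhdsWithin_le_nhds, ?_⟩
  filter_upwards [self_mem_nhdsWithin] with σ hσ
  have := (div_lt_iff₀ hb).1 hσ
  simp only [mem_Ioi]
  linarith

lemma tendsto_rpow_mul_one_sub_rpow_div {a b x e : ℝ} (hb : 0 < b) (hx : 0 < x) (he : 0 < e) :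
    Tendsto (fun σ => x ^ (a * σ) * ((1 - e ^ (b * σ + 1)) / (b * σ + 1))) (𝓝[>] (-1 / b))
      (𝓝 (x ^ (-(a / b)) * -log e)) := by
  have h_pow : Tendsto (fun σ => x ^ (a * σ)) (𝓝[>] (-1 / b)) (𝓝 (x ^ (-(a / b)))) := by
    refine (tendsto_const_nhds.rpow ?_ (Or.inl hx.ne')).mono_left nhdsWithin_le_nhds
    convert (continuous_const_mul a).tendsto (-1 / b) using 2
    ring
  exact h_pow.mul ((Real.tendsto_one_sub_rpow_div_nhdsNE he).comp
    ((tendsto_mul_add_one_nhdsGT hb).mono_right (nhdsGT_le_nhdsNE 0)))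

lemma norm_rpow_mul_one_sub_rpow_div_le {a b x e σ : ℝ} (ha : 0 ≤ a) (hb : 0 < b) (hx : 0 < x)
    (he₀ : 0 < e) (he₁ : e ≤ 1) (hσ : σ ∈ Ioc (-1 / b) 0) :
    ‖x ^ (a * σ) * ((1 - e ^ (b * σ + 1)) / (b * σ + 1))‖ ≤ (1 + x ^ (-(a / b))) * -log e := by
  have hX : 0 < b * σ + 1 := by
    have := (div_lt_iff₀ hb).1 hσ.1
    linarith
  have h_exp : -(a / b) ≤ a * σ := by
    have := mul_le_mul_of_nonneg_left hσ.1.le ha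
    rwa [mul_div, mul_neg_one, neg_div] at this
  rw [norm_mul, norm_of_nonneg (rpow_nonneg hx.le _), Real.norm_eq_abs]
  exact mul_le_mul (Real.rpow_le_one_add_rpow hx h_exp (mul_nonpos_of_nonneg_of_nonpos ha hσ.2))
    (Real.abs_one_sub_rpow_div_le he₀ he₁ hX) (abs_nonneg _) (by positivity)

theorem J₁_limit_general
    (a b q : ℕ) (hab : a < b)
    (p : ℝ) (hp : p < 1 - (a:ℝ)/b)
    (ρ' : ℝ) (hρ' : 0 < ρ') :
    Tendsto (fun σ : ℝ => ∫ x in Set.Ioc (0:ℝ) ρ',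
        x ^ ((a:ℝ) * σ) *
          ((1 - (Real.exp (-1 / (q * x ^ p))) ^ ((b:ℝ) * σ + 1)) / ((b:ℝ) * σ + 1)))
      (nhdsWithin (-1/(b:ℝ)) (Set.Ioi (-1/(b:ℝ))))
      (nhds (ρ' ^ (1 - (a:ℝ)/b - p) / (q * (1 - (a:ℝ)/b - p)))) := by
  have hb : (0 : ℝ) < b := Nat.cast_pos.2 (Nat.zero_lt_of_lt hab)
  have hα : 0 ≤ (a : ℝ) / b := by positivity
  have hexp : -1 < -((a : ℝ) / b) + -p := by linarith
  have he₁ (x : ℝ) (hx : 0 < x) : exp (-1 / (q * x ^ p)) ≤ 1 :=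
    exp_le_one_iff.2 (div_nonpos_of_nonpos_of_nonneg (by norm_num) (by positivity))
  have hlog (x : ℝ) (hx : 0 < x) : -log (exp (-1 / (q * x ^ p))) = x ^ (-p) / q := by
    rw [log_exp, rpow_neg hx.le]
    ring
  have h_val : ρ' ^ (1 - (a : ℝ) / b - p) / (q * (1 - a / b - p)) =
      ∫ x in Ioc 0 ρ', x ^ (-((a : ℝ) / b)) * (x ^ (-p) / q) := by
    simp_rw [← mul_div_assoc, integral_div, integral_Ioc_rpow_mul_rpow hexp hρ'.le]
    rw [div_div, show -((a : ℝ) / b) + -p + 1 = 1 - a / b - p by ring, mul_comm]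
  rw [h_val]
  refine tendsto_integral_filter_of_dominated_convergence
    (fun x => (1 + x ^ (-((a : ℝ) / b))) * x ^ (-p) / q)
    (.of_forall fun σ => Measurable.aestronglyMeasurable (by fun_prop)) ?_
    ((integrableOn_Ioc_one_add_rpow_mul_rpow (by linarith) hexp ρ').div_const _) ?_
  · filter_upwards [Ioc_mem_nhdsGT (div_neg_of_neg_of_pos neg_one_lt_zero hb)] with σ hσ
    refine (ae_restrict_iff' measurableSet_Ioc).2 (.of_forall fun x hx => ?_)
    simpa only [hlog x hx.1, mul_div_assoc] using
      norm_rpow_mul_one_sub_rpow_div_le (Nat.cast_nonneg a) hb hx.1 (exp_pos _) (he₁ x hx.1) hσ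
  · refine (ae_restrict_iff' measurableSet_Ioc).2 (.of_forall fun x hx => ?_)
    rw [← hlog x hx.1]
    exact tendsto_rpow_mul_one_sub_rpow_div hb hx.1 (exp_pos _)

theorem J₁_limit
    (a b q : ℕ) (hab : a < b) (hb : 2 ≤ b) (hq1 : 1 ≤ q) (hqb : q ≤ b)
    (p : ℝ) (hp0 : 0 < p) (hp : p < 1 - (a:ℝ)/b)
    (ρ' : ℝ) (hρ' : 0 < ρ') :
    Tendsto (fun σ : ℝ => ∫ x in Set.Ioc (0:ℝ) ρ',
        x ^ ((a:ℝ) * σ) *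
          ((1 - (Real.exp (-1 / (q * x ^ p))) ^ ((b:ℝ) * σ + 1)) / ((b:ℝ) * σ + 1)))
      (nhdsWithin (-1/(b:ℝ)) (Set.Ioi (-1/(b:ℝ))))
      (nhds (ρ' ^ (1 - (a:ℝ)/b - p) / (q * (1 - (a:ℝ)/b - p)))) :=
  J₁_limit_general a b q hab p hp ρ' hρ'
end

section
/- Let b ≥ 2 and q ≥ 1 be integers, 0 ≤ a < b an integer, p > 0, r₁, r₂ ∈ (0,1), λ > 0. Define L(λ) = (ρ(λr₂)^{1-a/b}/(1-a/b))·log(λr₂) + ρ(λr₂)^{1-a/b-p}/(q·(1-a/b-p)) and M(λ) = (b²/(q(b-a)))·λ^{-q/b}·ρ(λr₂)^{1-a/b} + (b/q)·r₂^{q/b}·∫_{ρ(λr₂)}^{r₁} x^{-a/b}·exp(1/(b·x^p)) dx, where ρ(y) = (−1/(q·log y))^{1/p} for 0 < y < exp(-1/(q·r₁^p)) and ρ(y) = r₁ for y ≥ exp(-1/(q·r₁^p)). Assume 0 < p < 1 - a/b. Then lim_{λ→0⁺} L(λ) = 0, lim_{λ→0⁺} M(λ) = ∞, lim_{λ→∞}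 L(λ) = ∞, and lim_{λ→∞} M(λ) = 0. -/
open Real Filter Set Topology MeasureTheory

noncomputable def rhoFun (q : ℕ) (p r₁ : ℝ) (y : ℝ) : ℝ :=
  if y < Real.exp (-1 / (q * r₁ ^ p)) then (-1 / (q * Real.log y)) ^ (1/p) else r₁

noncomputable def Lconst (a b q : ℕ) (p r₁ r₂ : ℝ) (lam : ℝ) : ℝ :=
  (rhoFun q p r₁ (lam * r₂)) ^ (1 - (a:ℝ)/b) / (1 - (a:ℝ)/b) * Real.log (lam * r₂)
    + (rhoFun q p r₁ (lam * r₂)) ^ (1 - (a:ℝ)/b - p) / (q * (1 - (a:ℝ)/b - p))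

noncomputable def Mconst (a b q : ℕ) (p r₁ r₂ : ℝ) (lam : ℝ) : ℝ :=
  ((b:ℝ)^2 / (q * ((b:ℝ) - a))) * lam ^ (-(q:ℝ)/b) *
      (rhoFun q p r₁ (lam * r₂)) ^ (1 - (a:ℝ)/b)
    + ((b:ℝ)/q) * r₂ ^ ((q:ℝ)/b) *
      ∫ x in Set.Ioc (rhoFun q p r₁ (lam * r₂)) r₁,
        x ^ (-(a:ℝ)/b) * Real.exp (1 / (b * x ^ p))

/-! Near `λ = 0⁺` we have `y = λ r₂ → 0⁺` and `ρ(y)^p · log y = -1/q`, so `L(λ)` is a constant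
multiple of `ρ(y)^(1-a/b-p)`, which tends to `0` with `ρ(y)`. The integral in `M(λ)` diverges since
`exp (1/(b x^p)) ≥ (b x^p)^(-n) / n! ≥ C / x` on `(0, 1]` once `n p ≥ 1`. For large `λ` we have
`ρ = r₁`, so `L(λ)` grows like `log λ` and `M(λ)` is a constant multiple of `λ^(-q/b)`. -/

lemma exists_pos_mul_inv_le_exp_one_div_mul_rpow {c p : ℝ} (hc : 0 < c) (hp : 0 < p) :
    ∃ C > 0, ∀ x ∈ Ioc (0 : ℝ) 1, C * x⁻¹ ≤ exp (1 / (c * x ^ p)) := by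
  obtain ⟨n, hn⟩ := exists_nat_ge (1 / p)
  have hnp : 1 ≤ (n : ℝ) * p := by rwa [div_le_iff₀ hp] at hn
  refine ⟨1 / (c ^ n * n.factorial), by positivity, fun x ⟨hx0, hx1⟩ => ?_⟩
  calc 1 / (c ^ n * n.factorial) * x⁻¹ = 1 / (c ^ n * n.factorial) * x ^ (-1 : ℝ) := by
        rw [rpow_neg_one]
    _ ≤ 1 / (c ^ n * n.factorial) * x ^ (-((n : ℝ) * p)) := by
        have : x ^ (-1 : ℝ) ≤ x ^ (-((n : ℝ) * p)) :=
          rpow_le_rpow_of_exponent_ge hx0 hx1 (by linarith)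
        gcongr
    _ = (1 / (c * x ^ p)) ^ n / n.factorial := by
        rw [mul_comm (n : ℝ), rpow_neg hx0.le, rpow_mul hx0.le, rpow_natCast, div_pow, one_pow,
          mul_pow]
        field_simp
    _ ≤ exp (1 / (c * x ^ p)) := pow_div_factorial_le_exp _ (by positivity) n

lemma tendsto_setIntegral_Ioc_atTop_of_mul_inv_le {f : ℝ → ℝ} {r C : ℝ} (hr : 0 < r)
    (hC : 0 < C) (hf : ContinuousOn f (Ioc 0 r)) (hle : ∀ x ∈ Ioc 0 r, C * x⁻¹ ≤ f x) :
    Tendsto (fun t => ∫ x in Ioc t r, f x) (𝓝[>] 0) atTop := by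
  have hlog : Tendsto (fun t => C * (log r - log t)) (𝓝[>] 0) atTop :=
    (tendsto_atTop_add_const_left _ _
      (tendsto_neg_atBot_atTop.comp tendsto_log_nhdsGT_zero)).const_mul_atTop hC
  refine tendsto_atTop_mono' _ ?_ hlog
  filter_upwards [Ioo_mem_nhdsGT hr] with t ⟨ht0, htr⟩
  have hsub : Icc t r ⊆ Ioc 0 r := fun x hx => ⟨ht0.trans_le hx.1, hx.2⟩
  calc C * (log r - log t) = ∫ x in Ioc t r, C * x⁻¹ := by
        rw [← intervalIntegral.integral_of_le htr.le, intervalIntegral.integral_const_mul,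
          integral_inv_of_pos ht0 hr, log_div hr.ne' ht0.ne']
    _ ≤ ∫ x in Ioc t r, f x := by
        refine setIntegral_mono_on ?_ ?_ measurableSet_Ioc fun x hx => hle x (hsub ⟨hx.1.le, hx.2⟩)
        · refine (ContinuousOn.integrableOn_Icc ?_).mono_set Ioc_subset_Icc_self
          exact continuousOn_const.mul (continuousOn_inv₀.mono fun x hx => (hsub hx).1.ne')
        · exact ((hf.mono hsub).integrableOn_Icc).mono_set Ioc_subset_Icc_self

lemma tendsto_setIntegral_Ioc_rpow_mul_exp_atTop {s c p r : ℝ} (hs : s ≤ 0) (hc : 0 < c)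
    (hp : 0 < p) (hr0 : 0 < r) (hr1 : r ≤ 1) :
    Tendsto (fun t => ∫ x in Ioc t r, x ^ s * exp (1 / (c * x ^ p))) (𝓝[>] 0) atTop := by
  obtain ⟨C, hC, hle⟩ := exists_pos_mul_inv_le_exp_one_div_mul_rpow hc hp
  have hcont : ContinuousOn (fun x => x ^ s * exp (1 / (c * x ^ p))) (Ioc 0 r) := by
    intro x hx
    have hx0 : x ≠ 0 := hx.1.ne'
    have hcx : c * x ^ p ≠ 0 := (mul_pos hc (rpow_pos_of_pos hx.1 p)).ne'
    exact ContinuousAt.continuousWithinAt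
      (by fun_prop (disch := first | exact Or.inl hx0 | exact hcx))
  refine tendsto_setIntegral_Ioc_atTop_of_mul_inv_le hr0 hC hcont fun x hx => ?_
  have hx1 : x ∈ Ioc 0 1 := ⟨hx.1, hx.2.trans hr1⟩
  exact (hle x hx1).trans <| le_mul_of_one_le_left (exp_pos _).le
    (one_le_rpow_of_pos_of_le_one_of_nonpos hx.1 hx1.2 hs)

lemma tendsto_rpow_nhdsGT_zero {s : ℝ} (hs : 0 < s) :
    Tendsto (fun u : ℝ => u ^ s) (𝓝[>] 0) (𝓝[>] 0) := by
  refine tendsto_nhdsWithin_iff.2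
    ⟨?_, eventually_nhdsWithin_of_forall fun u hu => rpow_pos_of_pos hu s⟩
  simpa [zero_rpow hs.ne'] using
    (continuousAt_rpow_const 0 s (Or.inr hs.le)).tendsto.mono_left nhdsWithin_le_nhds

lemma tendsto_mul_const_nhdsGT_zero {r : ℝ} (hr : 0 < r) :
    Tendsto (· * r) (𝓝[>] (0 : ℝ)) (𝓝[>] 0) := by
  refine tendsto_nhdsWithin_iff.2 ⟨?_, eventually_nhdsWithin_of_forall fun u hu => mul_pos hu hr⟩
  simpa using ((continuous_mul_const r).tendsto 0).mono_left nhdsWithin_le_nhds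

lemma tendsto_neg_one_div_mul_log_nhdsGT_zero {q : ℝ} (hq : 0 < q) :
    Tendsto (fun y => -1 / (q * log y)) (𝓝[>] 0) (𝓝[>] 0) := by
  refine (tendsto_inv_atTop_nhdsGT_zero.comp <|
    (tendsto_neg_atBot_atTop.comp tendsto_log_nhdsGT_zero).const_mul_atTop hq).congr fun y => ?_
  simp [div_eq_mul_inv, mul_neg]

lemma eventually_rhoFun_eq_nhdsGT_zero (q : ℕ) (p r₁ : ℝ) :
    ∀ᶠ y in 𝓝[>] 0, rhoFun q p r₁ y = (-1 / (q * log y)) ^ (1 / p) := by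
  filter_upwards [nhdsWithin_le_nhds (Iio_mem_nhds (exp_pos (-1 / (q * r₁ ^ p))))] with y hy
  exact if_pos hy

lemma tendsto_rhoFun_nhdsGT_zero {q : ℕ} {p : ℝ} (hq : 0 < q) (hp : 0 < p) (r₁ : ℝ) :
    Tendsto (rhoFun q p r₁) (𝓝[>] 0) (𝓝[>] 0) :=
  ((tendsto_rpow_nhdsGT_zero (one_div_pos.2 hp)).comp
    (tendsto_neg_one_div_mul_log_nhdsGT_zero (Nat.cast_pos.2 hq))).congr'
    ((eventually_rhoFun_eq_nhdsGT_zero q p r₁).mono fun _ h => h.symm)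

lemma eventually_rhoFun_rpow_mul_log_eq {q : ℕ} {p : ℝ} (hp : p ≠ 0) (r₁ : ℝ) :
    ∀ᶠ y in 𝓝[>] 0, rhoFun q p r₁ y ^ p * log y = -1 / q := by
  filter_upwards [eventually_rhoFun_eq_nhdsGT_zero q p r₁, Ioo_mem_nhdsGT one_pos] with y hρ hy
  have hlog : log y < 0 := log_neg hy.1 hy.2
  have hnonneg : 0 ≤ -1 / (q * log y) :=
    div_nonneg_of_nonpos (by norm_num) (mul_nonpos_of_nonneg_of_nonpos q.cast_nonneg hlog.le)
  rw [hρ, one_div, rpow_inv_rpow hnonneg hp, div_mul_eq_mul_div, neg_one_mul, neg_div,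
    div_mul_cancel_right₀ hlog.ne, neg_div, one_div]

lemma eventually_rhoFun_mul_eq_atTop (q : ℕ) (p r₁ : ℝ) {r₂ : ℝ} (hr₂ : 0 < r₂) :
    ∀ᶠ lam in atTop, rhoFun q p r₁ (lam * r₂) = r₁ :=
  (tendsto_id.atTop_mul_const hr₂).eventually (eventually_ge_atTop _) |>.mono
    fun _ h => if_neg h.not_gt

lemma Lconst_eq_mul_rpow {a b q : ℕ} {p r₁ r₂ lam : ℝ} (hq : 0 < q)
    (hαp : 0 < 1 - (a : ℝ) / b - p) (hp : 0 < p) (hρ : 0 < rhoFun q p r₁ (lam * r₂))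
    (hlog : rhoFun q p r₁ (lam * r₂) ^ p * log (lam * r₂) = -1 / q) :
    Lconst a b q p r₁ r₂ lam = (1 / (q * (1 - (a : ℝ) / b - p)) - 1 / (q * (1 - (a : ℝ) / b))) *
      rhoFun q p r₁ (lam * r₂) ^ (1 - (a : ℝ) / b - p) := by
  set ρ := rhoFun q p r₁ (lam * r₂)
  have hsplit : ρ ^ (1 - (a : ℝ) / b) = ρ ^ (1 - (a : ℝ) / b - p) * ρ ^ p := by
    rw [← rpow_add hρ, sub_add_cancel]
  have hq' : (q : ℝ) ≠ 0 := Nat.cast_ne_zero.2 hq.ne'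
  have hα : 1 - (a : ℝ) / b ≠ 0 := by linarith
  rw [Lconst, hsplit, mul_div_right_comm, mul_assoc, hlog]
  field_simp
  ring

theorem tendsto_Lconst_nhdsGT_zero {a b q : ℕ} {p : ℝ} (hq : 0 < q) (hp0 : 0 < p)
    (hp : p < 1 - (a : ℝ) / b) (r₁ : ℝ) {r₂ : ℝ} (hr₂ : 0 < r₂) :
    Tendsto (Lconst a b q p r₁ r₂) (𝓝[>] 0) (𝓝 0) := by
  have hαp : 0 < 1 - (a : ℝ) / b - p := sub_pos.2 hp
  have hy := tendsto_mul_const_nhdsGT_zero hr₂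
  have hρ : Tendsto (fun lam => rhoFun q p r₁ (lam * r₂)) (𝓝[>] 0) (𝓝[>] 0) :=
    (tendsto_rhoFun_nhdsGT_zero hq hp0 r₁).comp hy
  have hlim := (((tendsto_rpow_nhdsGT_zero hαp).comp hρ).mono_right nhdsWithin_le_nhds).const_mul
    (1 / (q * (1 - (a : ℝ) / b - p)) - 1 / (q * (1 - (a : ℝ) / b)))
  rw [mul_zero] at hlim
  refine hlim.congr' ?_
  filter_upwards [hy.eventually (eventually_rhoFun_rpow_mul_log_eq hp0.ne' r₁),
    hρ.eventually self_mem_nhdsWithin] with lam hlog hpos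
  exact (Lconst_eq_mul_rpow hq hαp hp0 hpos hlog).symm

theorem tendsto_Mconst_nhdsGT_zero {a b q : ℕ} {p r₁ r₂ : ℝ} (hab : a < b) (hq : 0 < q)
    (hp : 0 < p) (hr₁0 : 0 < r₁) (hr₁1 : r₁ ≤ 1) (hr₂ : 0 < r₂) :
    Tendsto (Mconst a b q p r₁ r₂) (𝓝[>] 0) atTop := by
  have hb : (0 : ℝ) < b := Nat.cast_pos.2 (Nat.zero_le a |>.trans_lt hab)
  have hba : (0 : ℝ) ≤ b - a := sub_nonneg.2 (Nat.cast_le.2 hab.le)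
  have hρ : Tendsto (fun lam => rhoFun q p r₁ (lam * r₂)) (𝓝[>] 0) (𝓝[>] 0) :=
    (tendsto_rhoFun_nhdsGT_zero hq hp r₁).comp (tendsto_mul_const_nhdsGT_zero hr₂)
  have hI := (tendsto_setIntegral_Ioc_rpow_mul_exp_atTop (s := -(a : ℝ) / b)
    (div_nonpos_of_nonpos_of_nonneg (neg_nonpos.2 a.cast_nonneg) hb.le) hb hp hr₁0 hr₁1).comp hρ
  refine Tendsto.zero_eventuallyLE_add_atTop ?_ (hI.const_mul_atTop (by positivity))
  filter_upwards [self_mem_nhdsWithin, hρ.eventually self_mem_nhdsWithin] with lam hlam hpos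
  have hlam' : (0 : ℝ) ≤ lam ^ (-(q : ℝ) / b) := rpow_nonneg (le_of_lt hlam) _
  have hρ' : (0 : ℝ) ≤ rhoFun q p r₁ (lam * r₂) ^ (1 - (a : ℝ) / b) := rpow_nonneg hpos.le _
  simp only [Pi.zero_apply]
  positivity

theorem tendsto_Lconst_atTop {a b q : ℕ} {p r₁ r₂ : ℝ} (ha : (a : ℝ) / b < 1) (hr₁ : 0 < r₁)
    (hr₂ : 0 < r₂) :
    Tendsto (Lconst a b q p r₁ r₂) atTop atTop := by
  have hlog : Tendsto (fun lam => log (lam * r₂)) atTop atTop :=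
    tendsto_log_atTop.comp (tendsto_id.atTop_mul_const hr₂)
  have hlim := tendsto_atTop_add_const_right _
    (r₁ ^ (1 - (a : ℝ) / b - p) / (q * (1 - (a : ℝ) / b - p)))
    (hlog.const_mul_atTop (div_pos (rpow_pos_of_pos hr₁ (1 - (a : ℝ) / b)) (sub_pos.2 ha)))
  refine hlim.congr' ?_
  filter_upwards [eventually_rhoFun_mul_eq_atTop q p r₁ hr₂] with lam h
  rw [Lconst, h]

theorem tendsto_Mconst_atTop {a b q : ℕ} {p r₁ r₂ : ℝ} (hb : 0 < b) (hq : 0 < q) (hr₂ : 0 < r₂) :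
    Tendsto (Mconst a b q p r₁ r₂) atTop (𝓝 0) := by
  have hpow : Tendsto (fun lam : ℝ => lam ^ (-(q : ℝ) / b)) atTop (𝓝 0) := by
    simpa only [neg_div] using tendsto_rpow_neg_atTop (by positivity : (0 : ℝ) < q / b)
  have hlim := (hpow.const_mul ((b : ℝ) ^ 2 / (q * ((b : ℝ) - a)))).mul_const
    (r₁ ^ (1 - (a : ℝ) / b))
  rw [mul_zero, zero_mul] at hlim
  refine hlim.congr' ?_
  filter_upwards [eventually_rhoFun_mul_eq_atTop q p r₁ hr₂] with lam h
  simp only [Mconst, h, Ioc_self, Measure.restrict_empty, integral_zero_measure, mul_zero, add_zero]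

theorem L_M_limits_general
    (a b q : ℕ) (hab : a < b) (hq1 : 1 ≤ q)
    (p : ℝ) (hp0 : 0 < p) (hp : p < 1 - (a:ℝ)/b)
    (r₁ r₂ : ℝ) (hr₁ : r₁ ∈ Set.Ioo (0:ℝ) 1) (hr₂ : r₂ ∈ Set.Ioo (0:ℝ) 1) :
    Tendsto (fun lam => Lconst a b q p r₁ r₂ lam) (nhdsWithin 0 (Set.Ioi 0)) (nhds 0) ∧
    Tendsto (fun lam => Mconst a b q p r₁ r₂ lam) (nhdsWithin 0 (Set.Ioi 0)) atTop ∧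
    Tendsto (fun lam => Lconst a b q p r₁ r₂ lam) atTop atTop ∧
    Tendsto (fun lam => Mconst a b q p r₁ r₂ lam) atTop (nhds 0) :=
  ⟨tendsto_Lconst_nhdsGT_zero hq1 hp0 hp r₁ hr₂.1,
    tendsto_Mconst_nhdsGT_zero hab hq1 hp0 hr₁.1 hr₁.2.le hr₂.1,
    tendsto_Lconst_atTop (by linarith) hr₁.1 hr₂.1,
    tendsto_Mconst_atTop (Nat.zero_le a |>.trans_lt hab) hq1 hr₂.1⟩

theorem L_M_limits
    (a b q : ℕ) (hab : a < b) (hb : 2 ≤ b) (hq1 : 1 ≤ q) (hqb : q ≤ b)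
    (p : ℝ) (hp0 : 0 < p) (hp : p < 1 - (a:ℝ)/b)
    (r₁ r₂ : ℝ) (hr₁ : r₁ ∈ Set.Ioo (0:ℝ) 1) (hr₂ : r₂ ∈ Set.Ioo (0:ℝ) 1) :
    Tendsto (fun lam => Lconst a b q p r₁ r₂ lam) (nhdsWithin 0 (Set.Ioi 0)) (nhds 0) ∧
    Tendsto (fun lam => Mconst a b q p r₁ r₂ lam) (nhdsWithin 0 (Set.Ioi 0)) atTop ∧
    Tendsto (fun lam => Lconst a b q p r₁ r₂ lam) atTop atTop ∧
    Tendsto (fun lam => Mconst a b q p r₁ r₂ lam) atTop (nhds 0) :=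
  L_M_limits_general a b q hab hq1 p hp0 hp r₁ r₂ hr₁ hr₂
end
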